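/- Let areas partition the edges of a rooted tree according to sensor locations, where area A_i has root sensor s_i and child sensors child(s_i). Then under lossless flow, the effective measurement Δs_i = s_i − Σ_{s ∈ child(s_i)} s equals the sum of the loads of exactly the connected vertices strictly inside area A_i, independent of the outage hypotheses in other areas. -/
import Mathlib


open Classical

/-- `Anc parent v u` : `u` lies on the path from `v` up to the root, i.e. `v` is a
descendant of `u` (including `v = u`). -/
def Anc {V : Type*} (parent : V → V) : V → V → Prop :=
  Relation.ReflTransGen (fun a b => parent a = b)

/-- A vertex is connected to the root iff no outage edge (identified by its lower
vertex, a member of `S`) lies weakly above it. -/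
def Conn {V : Type*} (parent : V → V) (S : Finset V) (v : V) : Prop :=
  ∀ u ∈ S, ¬ Anc parent v u

/-- The reading of a flow sensor on the parent edge of `m`: the total load of all
connected vertices downstream of (and including) `m`. -/
noncomputable def reading {V : Type*} [Fintype V] (parent : V → V) (S : Finset V)
    (x : V → ℝ) (m : V) : ℝ :=
  ∑ v ∈ Finset.univ.filter (fun v => Anc parent v m ∧ Conn parent S v), x v

/-- The child sensors of the sensor at `w`: sensors strictly downstream of `w` with no
other sensor strictly between them and `w`. -/
noncomputable def childSensors {V : Type*} [Fintype V] (parent : V → V) (M : Finset V)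
    (w : V) : Finset V :=
  M.filter (fun u => u ≠ w ∧ Anc parent u w ∧
    ∀ m ∈ M, Anc parent u m → Anc parent m w → m = u ∨ m = w)

lemma anc_trans {V : Type*} {parent : V → V} {a b c : V}
    (h1 : Anc parent a b) (h2 : Anc parent b c) : Anc parent a c :=
  Relation.ReflTransGen.trans h1 h2

lemma anc_comparable {V : Type*} {parent : V → V} {v a b : V}
    (h1 : Anc parent v a) : Anc parent v b → Anc parent a b ∨ Anc parent b a := by
  induction h1 using Relation.ReflTransGen.head_induction_on with
  | refl => exact fun h2 => Or.inl h2
  | head hstep htail ih =>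
    intro h2
    rcases Relation.ReflTransGen.cases_head h2 with h | ⟨c', hc, h2'⟩
    · exact Or.inr (h ▸ Relation.ReflTransGen.head hstep htail)
    · apply ih
      rwa [← hc, hstep] at h2'

/-- **The effective measurement of an area depends only on the area's own loads.**
In a rooted tree with loads `x`, sensors on the edge set `M`, and an arbitrary outage
set `S`, the effective measurement `Δs_w = s_w − ∑_{u ∈ child(w)} s_u` of the area
rooted at sensor `w` equals the total load of exactly the connected vertices strictly
inside the area (downstream of `w` but not downstream of any child sensor), regardless
of the outage hypotheses in other areas. -/
theorem effective_measurement_eq_area_load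
    {V : Type*} [Fintype V] (parent : V → V) (r : V) (depth : V → ℕ)
    (hroot : parent r = r) (hdepth : ∀ v, v ≠ r → depth v = depth (parent v) + 1)
    (hreach : ∀ v, Anc parent v r)
    (x : V → ℝ) (M : Finset V) (hM : r ∉ M) (S : Finset V)
    (w : V) (hw : w ∈ M) :
    reading parent S x w - ∑ u ∈ childSensors parent M w, reading parent S x u =
      ∑ v ∈ Finset.univ.filter (fun v => Anc parent v w ∧
          (∀ u ∈ childSensors parent M w, ¬ Anc parent v u) ∧ Conn parent S v), x v := by

  classical
  set C := childSensors parent M w with hC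
  have hCm : ∀ u ∈ C, u ∈ M ∧ u ≠ w ∧ Anc parent u w ∧
      ∀ m ∈ M, Anc parent u m → Anc parent m w → m = u ∨ m = w := by
    intro u hu
    simp only [hC, childSensors, Finset.mem_filter] at hu
    exact ⟨hu.1, hu.2⟩
  set B : V → Finset V :=
    fun u => Finset.univ.filter (fun v => Anc parent v u ∧ Conn parent S v) with hB
  have hdisj : (↑C : Set V).PairwiseDisjoint B := by
    intro u1 h1 u2 h2 hne
    simp only [Finset.mem_coe] at h1 h2
    refine Finset.disjoint_left.mpr ?_
    intro v hv1 hv2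
    simp only [hB, Finset.mem_filter] at hv1 hv2
    obtain ⟨hm1, hne1, hanc1, hmax1⟩ := hCm u1 h1
    obtain ⟨hm2, hne2, hanc2, hmax2⟩ := hCm u2 h2
    rcases anc_comparable hv1.2.1 hv2.2.1 with h | h
    · rcases hmax1 u2 hm2 h hanc2 with h' | h'
      · exact hne h'.symm
      · exact hne2 h'
    · rcases hmax2 u1 hm1 h hanc1 with h' | h'
      · exact hne h'
      · exact hne1 h'
  have hunion : Finset.univ.filter (fun v => Anc parent v w ∧ Conn parent S v) =
      (C.biUnion B) ∪
      Finset.univ.filter (fun v => Anc parent v w ∧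
        (∀ u ∈ C, ¬ Anc parent v u) ∧ Conn parent S v) := by
    ext v
    simp only [hB, Finset.mem_filter, Finset.mem_union, Finset.mem_biUnion,
      Finset.mem_univ, true_and]
    constructor
    · rintro ⟨hw', hconn⟩
      by_cases hex : ∃ u ∈ C, Anc parent v u
      · obtain ⟨u, hu, hvu⟩ := hex
        exact Or.inl ⟨u, hu, hvu, hconn⟩
      · push_neg at hex
        exact Or.inr ⟨hw', hex, hconn⟩
    · rintro (⟨u, hu, hvu, hconn⟩ | ⟨hw', _, hconn⟩)
      · exact ⟨anc_trans hvu (hCm u hu).2.2.1, hconn⟩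
      · exact ⟨hw', hconn⟩
  have hdisj2 : Disjoint (C.biUnion B)
      (Finset.univ.filter (fun v => Anc parent v w ∧
        (∀ u ∈ C, ¬ Anc parent v u) ∧ Conn parent S v)) := by
    refine Finset.disjoint_left.mpr ?_
    intro v hv1 hv2
    simp only [hB, Finset.mem_filter, Finset.mem_biUnion, Finset.mem_univ, true_and] at hv1 hv2
    obtain ⟨u, hu, hvu, _⟩ := hv1
    exact hv2.2.1 u hu hvu
  have hsum : reading parent S x w =
      (∑ u ∈ C, reading parent S x u) +
      ∑ v ∈ Finset.univ.filter (fun v => Anc parent v w ∧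
          (∀ u ∈ C, ¬ Anc parent v u) ∧ Conn parent S v), x v := by
    have h1 : ∑ u ∈ C, reading parent S x u = ∑ v ∈ C.biUnion B, x v :=
      (Finset.sum_biUnion hdisj).symm
    rw [reading, hunion, Finset.sum_union hdisj2, h1]
  rw [hsum]
  ring
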